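/- arXiv:1603.05202 — 5 statements merged into one kernel-verified Lean document; each statement's English description precedes it below -/
import Mathlib

section
/- Let n ≥ 1 and let X ⊆ ℝ^n be the set of centers of a saturated packing of unit balls; that is, ‖x − y‖ ≥ 2 for all distinct x, y ∈ X, and every point p ∈ ℝ^n satisfies ‖p − x‖ < 2 for some x ∈ X. Let P = ⋃_{x ∈ X} B(x,1) be the union of the open unit balls of the packing. Then the lower density of the packing is at least 2^{−n}: liminf_{r → ∞} vol(P ∩ B(0,r)) / vol(B(0,r)) ≥ 2^{−n}, where vol denotes Lebesgue measure and B(c,r) the open ball of radius r about c. -/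
open MeasureTheory Filter Metric

/-- Every saturated packing of unit balls in ℝⁿ has lower density at least 2⁻ⁿ. -/
theorem saturated_packing_density (n : ℕ) (hn : 1 ≤ n)
    (X : Set (EuclideanSpace ℝ (Fin n)))
    (hsep : ∀ x ∈ X, ∀ y ∈ X, x ≠ y → 2 ≤ dist x y)
    (hsat : ∀ p : EuclideanSpace ℝ (Fin n), ∃ x ∈ X, dist p x < 2) :
    ((2 : ENNReal)⁻¹) ^ n ≤
      liminf (fun r : ℝ =>
        volume ((⋃ x ∈ X, Metric.ball x 1) ∩ Metric.ball (0 : EuclideanSpace ℝ (Fin n)) r) /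
          volume (Metric.ball (0 : EuclideanSpace ℝ (Fin n)) r)) atTop := by
  haveI : Nonempty (Fin n) := ⟨⟨0, hn⟩⟩
  set P : Set (EuclideanSpace ℝ (Fin n)) := ⋃ x ∈ X, Metric.ball x 1 with hP
  set ω : ENNReal := volume (ball (0 : EuclideanSpace ℝ (Fin n)) 1) with hω
  have hω0 : ω ≠ 0 := (measure_ball_pos _ _ one_pos).ne'
  have hωtop : ω ≠ ⊤ := measure_ball_lt_top.ne
  have hrank : Module.finrank ℝ (EuclideanSpace ℝ (Fin n)) = n := finrank_euclideanSpace_fin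
  have hdisj : X.PairwiseDisjoint (fun x => ball x (1:ℝ)) := by
    intro x hx y hy hxy
    exact ball_disjoint_ball (by have := hsep x hx y hy hxy; linarith)
  have hXc : X.Countable :=
    hdisj.countable_of_isOpen (fun x _ => isOpen_ball)
      (fun x _ => ⟨x, mem_ball_self one_pos⟩)
  -- main estimate
  have key : ∀ r : ℝ, ((2 : ENNReal)⁻¹) ^ n * volume (ball (0 : EuclideanSpace ℝ (Fin n)) r) ≤
      volume (P ∩ ball (0 : EuclideanSpace ℝ (Fin n)) (r + 3)) := by
    intro r
    set F : Set (EuclideanSpace ℝ (Fin n)) := X ∩ ball 0 (r + 2) with hF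
    have hFc : F.Countable := hXc.mono Set.inter_subset_left
    have cover : ball (0 : EuclideanSpace ℝ (Fin n)) r ⊆ ⋃ x ∈ F, ball x 2 := by
      intro p hp
      obtain ⟨x, hx, hpx⟩ := hsat p
      have htri := dist_triangle x p 0
      rw [dist_comm x p] at htri
      rw [mem_ball] at hp
      refine Set.mem_biUnion (⟨hx, ?_⟩ : x ∈ F) (by simpa [mem_ball] using hpx)
      rw [mem_ball]
      linarith
    have hball2 : ∀ x : EuclideanSpace ℝ (Fin n),
        volume (ball x (2:ℝ)) = (2:ENNReal) ^ n * ω := by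
      intro x
      rw [Measure.addHaar_ball volume x (by norm_num : (0:ℝ) ≤ 2), hrank, hω]
      congr 1
      rw [ENNReal.ofReal_pow (by norm_num)]
      norm_num
    have step1 : volume (ball (0 : EuclideanSpace ℝ (Fin n)) r) ≤
        (2:ENNReal) ^ n * ∑' _ : F, ω := by
      calc volume (ball (0 : EuclideanSpace ℝ (Fin n)) r)
          ≤ volume (⋃ x ∈ F, ball x 2) := measure_mono cover
        _ ≤ ∑' x : F, volume (ball (x : EuclideanSpace ℝ (Fin n)) 2) :=
            measure_biUnion_le _ hFc _
        _ = ∑' _ : F, (2:ENNReal) ^ n * ω := by simp_rw [hball2]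
        _ = (2:ENNReal) ^ n * ∑' _ : F, ω := ENNReal.tsum_mul_left
    have step2 : ∑' _ : F, ω ≤ volume (P ∩ ball (0 : EuclideanSpace ℝ (Fin n)) (r + 3)) := by
      have hdF : F.PairwiseDisjoint (fun x => ball x (1:ℝ)) :=
        hdisj.subset Set.inter_subset_left
      have hmb : volume (⋃ x ∈ F, ball x (1:ℝ)) =
          ∑' x : F, volume (ball (x : EuclideanSpace ℝ (Fin n)) 1) :=
        measure_biUnion hFc hdF (fun x _ => measurableSet_ball)
      have hsub : (⋃ x ∈ F, ball x (1:ℝ)) ⊆ P ∩ ball (0 : EuclideanSpace ℝ (Fin n)) (r + 3) := by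
        intro p hp
        obtain ⟨x, hxF, hpx⟩ := Set.mem_iUnion₂.1 hp
        refine ⟨Set.mem_biUnion hxF.1 hpx, ?_⟩
        have h1 : dist p x < 1 := mem_ball.1 hpx
        have h2 : dist x 0 < r + 2 := mem_ball.1 hxF.2
        have htri : dist p 0 ≤ dist p x + dist x 0 := dist_triangle _ _ _
        rw [mem_ball]
        linarith
      calc ∑' _ : F, ω = ∑' x : F, volume (ball (x : EuclideanSpace ℝ (Fin n)) 1) := by
            simp_rw [hω, Measure.addHaar_ball_center]
        _ = volume (⋃ x ∈ F, ball x (1:ℝ)) := hmb.symm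
        _ ≤ volume (P ∩ ball (0 : EuclideanSpace ℝ (Fin n)) (r + 3)) := measure_mono hsub
    calc ((2 : ENNReal)⁻¹) ^ n * volume (ball (0 : EuclideanSpace ℝ (Fin n)) r)
        ≤ ((2 : ENNReal)⁻¹) ^ n * ((2:ENNReal) ^ n * ∑' _ : F, ω) :=
          mul_le_mul_right step1 _
      _ = (((2 : ENNReal)⁻¹) * 2) ^ n * ∑' _ : F, ω := by rw [mul_pow, mul_assoc]
      _ = ∑' _ : F, ω := by
          rw [ENNReal.inv_mul_cancel (by norm_num) (by norm_num)]
          simp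
      _ ≤ _ := step2
  -- lower bound function
  have hfg : ∀ᶠ r in atTop,
      ((2 : ENNReal)⁻¹) ^ n *
          (volume (ball (0 : EuclideanSpace ℝ (Fin n)) (r - 3)) /
            volume (ball (0 : EuclideanSpace ℝ (Fin n)) r)) ≤
        volume (P ∩ ball (0 : EuclideanSpace ℝ (Fin n)) r) /
          volume (ball (0 : EuclideanSpace ℝ (Fin n)) r) := by
    filter_upwards [eventually_ge_atTop (4:ℝ)] with r hr
    have hk := key (r - 3)
    rw [sub_add_cancel] at hk
    rw [← mul_div_assoc]
    exact ENNReal.div_le_div_right hk _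
  have hgt : Tendsto (fun r : ℝ => ((2 : ENNReal)⁻¹) ^ n *
      (volume (ball (0 : EuclideanSpace ℝ (Fin n)) (r - 3)) /
        volume (ball (0 : EuclideanSpace ℝ (Fin n)) r))) atTop
      (nhds (((2 : ENNReal)⁻¹) ^ n)) := by
    have heq : (fun r : ℝ => ((2 : ENNReal)⁻¹) ^ n * ENNReal.ofReal (((r - 3) / r) ^ n))
        =ᶠ[atTop] (fun r : ℝ => ((2 : ENNReal)⁻¹) ^ n *
          (volume (ball (0 : EuclideanSpace ℝ (Fin n)) (r - 3)) /
            volume (ball (0 : EuclideanSpace ℝ (Fin n)) r))) := by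
      filter_upwards [eventually_ge_atTop (4:ℝ)] with r hr
      have hr0 : (0:ℝ) < r := by linarith
      have hr3 : (0:ℝ) ≤ r - 3 := by linarith
      rw [Measure.addHaar_ball volume _ hr3, Measure.addHaar_ball volume _ hr0.le, hrank,
        ENNReal.mul_div_mul_right _ _ hω0 hωtop,
        ← ENNReal.ofReal_div_of_pos (pow_pos hr0 n), ← div_pow]
    have hreal : Tendsto (fun r : ℝ => ((r - 3) / r) ^ n) atTop (nhds 1) := by
      have h1 : Tendsto (fun r : ℝ => (r - 3) / r) atTop (nhds 1) := by
        have h2 : Tendsto (fun r : ℝ => 1 - 3 / r) atTop (nhds (1 - 0)) :=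
          tendsto_const_nhds.sub (tendsto_const_nhds.div_atTop tendsto_id)
        rw [sub_zero] at h2
        refine h2.congr' ?_
        filter_upwards [eventually_ne_atTop (0:ℝ)] with r hr
        field_simp
      simpa using h1.pow n
    have h3 : Tendsto (fun r : ℝ => ((2 : ENNReal)⁻¹) ^ n * ENNReal.ofReal (((r - 3) / r) ^ n))
        atTop (nhds (((2 : ENNReal)⁻¹) ^ n * ENNReal.ofReal 1)) :=
      ENNReal.Tendsto.const_mul (ENNReal.tendsto_ofReal hreal)
        (Or.inr (by simp [ENNReal.inv_ne_top]))
    simpa using h3.congr' heq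
  calc ((2 : ENNReal)⁻¹) ^ n
      = liminf (fun r : ℝ => ((2 : ENNReal)⁻¹) ^ n *
          (volume (ball (0 : EuclideanSpace ℝ (Fin n)) (r - 3)) /
            volume (ball (0 : EuclideanSpace ℝ (Fin n)) r))) atTop := hgt.liminf_eq.symm
    _ ≤ _ := liminf_le_liminf hfg
end

section
/- Let N ≥ 2, let x_1, …, x_N be pairwise distinct unit vectors in ℝ^n, and let f : ℝ → ℝ be convex on the interval (0,4] and nonincreasing on (0,4]. Then Σ_{i≠j} f(‖x_i − x_j‖²) ≥ N(N−1) · f(2N/(N−1)). In particular, since the N-point regular simplex (which exists on S^{n−1} when N ≤ n+1) has all squared distances equal to 2 + 2/(N−1) = 2N/(N−1) and attains this bound, the regular simplex minimizes f-energy among all N-point configurations on S^{n−1} for every decreasing convex potential f, for N ≤ n+1. -/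
/-!
Jensen's inequality for `f` over the `N(N-1)` ordered pairs bounds the energy below by
`N(N-1) f(D)`, where `D` is the mean squared distance. Expanding
`∑ᵢ ∑ⱼ ‖xᵢ - xⱼ‖² = 2N² - 2‖∑ᵢ xᵢ‖²` shows `D ≤ 2N/(N-1)`, and monotonicity of `f` does the
rest. The regular simplex attains the bound: the vectors `eᵢ - (1/N)∑ₖ eₖ` of `ℝᴺ` have Gram
matrix `I - J/N` and span a hyperplane, which embeds isometrically into `ℝⁿ` once `N - 1 ≤ n`.
-/

open Finset RealInnerProductSpace Module

theorem ConvexOn.card_mul_le_sum_of_antitoneOn {ι : Type*} {s : Set ℝ} {f : ℝ → ℝ}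
    (hconv : ConvexOn ℝ s f) (hmono : AntitoneOn f s) {t : Finset ι} {a : ι → ℝ}
    (ha : ∀ i ∈ t, a i ∈ s) {T : ℝ} (hT : T ∈ s) (hsum : ∑ i ∈ t, a i ≤ #t * T) :
    #t * f T ≤ ∑ i ∈ t, f (a i) := by
  rcases t.eq_empty_or_nonempty with rfl | ht
  · simp
  have hcard : (0 : ℝ) < #t := by exact_mod_cast ht.card_pos
  have hw₀ : ∀ i ∈ t, (0 : ℝ) ≤ (#t : ℝ)⁻¹ := fun _ _ => by positivity
  have hw₁ : ∑ _ ∈ t, (#t : ℝ)⁻¹ = 1 := by simp [hcard.ne']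
  have hmean_le : ∑ i ∈ t, (#t : ℝ)⁻¹ • a i ≤ T := by
    rw [← smul_sum, smul_eq_mul, inv_mul_le_iff₀ hcard]
    exact hsum
  calc #t * f T ≤ #t * f (∑ i ∈ t, (#t : ℝ)⁻¹ • a i) := by
        gcongr
        exact hmono (hconv.1.sum_mem hw₀ hw₁ ha) hT hmean_le
    _ ≤ #t * ∑ i ∈ t, (#t : ℝ)⁻¹ • f (a i) := by
        gcongr
        exact hconv.map_sum_le hw₀ hw₁ ha
    _ = ∑ i ∈ t, f (a i) := by
        rw [← smul_sum, smul_eq_mul, ← mul_assoc, mul_inv_cancel₀ hcard.ne', one_mul]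

theorem card_offDiag_univ {ι : Type*} [Fintype ι] [DecidableEq ι] :
    ((univ : Finset ι).offDiag.card : ℝ) = Fintype.card ι * (Fintype.card ι - 1) := by
  rw [offDiag_card, card_univ, Nat.cast_sub (Nat.le_mul_self _)]
  push_cast
  ring

theorem norm_sub_sq_mem_Ioc {E : Type*} [NormedAddCommGroup E] {x y : E} (hx : ‖x‖ = 1)
    (hy : ‖y‖ = 1) (hxy : x ≠ y) :
    ‖x - y‖ ^ 2 ∈ Set.Ioc (0 : ℝ) 4 := by
  refine ⟨by positivity [sub_ne_zero.2 hxy], ?_⟩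
  have : ‖x - y‖ ≤ 2 := (norm_sub_le x y).trans (by rw [hx, hy]; norm_num)
  nlinarith [norm_nonneg (x - y)]

section InnerProductSpace

variable {ι E : Type*} [Fintype ι] [NormedAddCommGroup E] [InnerProductSpace ℝ E]

theorem sum_sum_norm_sub_sq (x : ι → E) :
    ∑ i, ∑ j, ‖x i - x j‖ ^ 2 = 2 * Fintype.card ι * ∑ i, ‖x i‖ ^ 2 - 2 * ‖∑ i, x i‖ ^ 2 := by
  simp only [norm_sub_sq_real, sum_add_distrib, sum_sub_distrib, sum_const, card_univ,
    nsmul_eq_mul, ← mul_sum, ← sum_inner, ← inner_sum, real_inner_self_eq_norm_sq]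
  ring

theorem sum_offDiag_norm_sub_sq_le [DecidableEq ι] (x : ι → E) (hx : ∀ i, ‖x i‖ = 1) :
    ∑ p ∈ univ.offDiag, ‖x p.1 - x p.2‖ ^ 2 ≤ 2 * Fintype.card ι ^ 2 := by
  have hdiag : ∑ p ∈ univ.offDiag, ‖x p.1 - x p.2‖ ^ 2 = ∑ i, ∑ j, ‖x i - x j‖ ^ 2 := by
    rw [← sum_product', univ_product_univ]
    refine sum_subset (subset_univ _) fun p _ hp => ?_
    simp_all
  rw [hdiag, sum_sum_norm_sub_sq]
  simp only [hx, one_pow, sum_const, card_univ, nsmul_eq_mul, mul_one]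
  nlinarith [sq_nonneg ‖∑ i, x i‖]

end InnerProductSpace

theorem exists_linearIsometry_of_finrank_le {𝕜 E F : Type*} [RCLike 𝕜]
    [NormedAddCommGroup E] [InnerProductSpace 𝕜 E] [FiniteDimensional 𝕜 E]
    [NormedAddCommGroup F] [InnerProductSpace 𝕜 F] [FiniteDimensional 𝕜 F]
    (h : finrank 𝕜 E ≤ finrank 𝕜 F) : Nonempty (E →ₗᵢ[𝕜] F) := by
  let bE := stdOrthonormalBasis 𝕜 E
  let v := stdOrthonormalBasis 𝕜 F ∘ Fin.castLE h
  have hv : Orthonormal 𝕜 v :=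
    (stdOrthonormalBasis 𝕜 F).orthonormal.comp _ (Fin.castLE_injective h)
  refine ⟨(bE.toBasis.constr 𝕜 v).isometryOfOrthonormal (v := bE.toBasis) ?_ ?_⟩
  · simp [bE.orthonormal]
  · simpa [Function.comp_def, Basis.constr_basis] using hv

section Simplex

variable {ι F : Type*} [Fintype ι] [DecidableEq ι]
  [NormedAddCommGroup F] [InnerProductSpace ℝ F] [FiniteDimensional ℝ F]

theorem exists_inner_eq_ite_sub_inv_card [Nonempty ι] (hF : Fintype.card ι ≤ finrank ℝ F + 1) :
    ∃ w : ι → F, ∀ i j, ⟪w i, w j⟫ = (if i = j then 1 else 0) - (Fintype.card ι : ℝ)⁻¹ := by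
  let u : EuclideanSpace ℝ ι := WithLp.toLp 2 fun _ => 1
  let w (i : ι) : EuclideanSpace ℝ ι := EuclideanSpace.single i 1 - (Fintype.card ι : ℝ)⁻¹ • u
  have huu : ⟪u, u⟫ = Fintype.card ι := by
    rw [PiLp.inner_apply]
    simp [u]
  have hwu (i : ι) : w i ∈ (ℝ ∙ u)ᗮ := by
    rw [Submodule.mem_orthogonal_singleton_iff_inner_right]
    simp only [w, inner_sub_right, real_inner_smul_right, EuclideanSpace.inner_single_right, huu]
    field_simp
    simp [u]
  have hrank : finrank ℝ (ℝ ∙ u)ᗮ ≤ finrank ℝ F := by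
    have hu : u ≠ 0 := by
      intro h
      rw [h, inner_zero_left] at huu
      exact Fintype.card_ne_zero (by exact_mod_cast huu.symm)
    have := Submodule.finrank_add_finrank_orthogonal (ℝ ∙ u)
    rw [finrank_span_singleton hu, finrank_euclideanSpace] at this
    rw [← this, add_comm] at hF
    exact Nat.le_of_add_le_add_right hF
  obtain ⟨L⟩ := exists_linearIsometry_of_finrank_le hrank
  refine ⟨fun i => L ⟨w i, hwu i⟩, fun i j => ?_⟩
  rw [L.inner_map_map, Submodule.coe_inner]
  simp only [w, inner_sub_left, inner_sub_right, real_inner_smul_left, real_inner_smul_right,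
    EuclideanSpace.inner_single_left, EuclideanSpace.inner_single_right, huu]
  simp [u, PiLp.single_apply, eq_comm]

theorem exists_unit_vectors_inner_eq_neg_inv (hι : 1 < Fintype.card ι)
    (hF : Fintype.card ι ≤ finrank ℝ F + 1) :
    ∃ y : ι → F, (∀ i, ‖y i‖ = 1) ∧
      ∀ i j, i ≠ j → ⟪y i, y j⟫ = -1 / ((Fintype.card ι : ℝ) - 1) := by
  have hN : (0 : ℝ) < Fintype.card ι - 1 := by
    rw [sub_pos]
    exact_mod_cast hι
  have : Nonempty ι := Fintype.card_pos_iff.mp (by omega)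
  obtain ⟨w, hw⟩ := exists_inner_eq_ite_sub_inv_card (F := F) hF
  let c := √(Fintype.card ι / (Fintype.card ι - 1))
  have hc : c * c = Fintype.card ι / (Fintype.card ι - 1) :=
    Real.mul_self_sqrt (div_nonneg (by positivity) hN.le)
  have hcw (i j : ι) : ⟪c • w i, c • w j⟫ = c * c * ⟪w i, w j⟫ := by
    rw [real_inner_smul_left, real_inner_smul_right, mul_assoc]
  refine ⟨fun i => c • w i, fun i => ?_, fun i j hij => ?_⟩
  · rw [← pow_eq_one_iff_of_nonneg (norm_nonneg _) two_ne_zero, ← real_inner_self_eq_norm_sq,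
      hcw, hc, hw, if_pos rfl]
    field_simp [hN.ne']
  · rw [hcw, hc, hw, if_neg hij]
    field_simp [hN.ne']
    ring

end Simplex

/-- For a decreasing convex potential `f` on `(0,4]`, every configuration of `N` distinct
unit vectors in ℝⁿ has `f`-energy at least `N(N-1)·f(2N/(N-1))`; moreover, when
`N ≤ n+1` the `N`-point regular simplex exists on the sphere (all squared distances
equal to `2N/(N-1)`) and attains this bound. -/
theorem simplex_minimizes_convex_energy (n N : ℕ) (hN : 2 ≤ N)
    (f : ℝ → ℝ) (hconv : ConvexOn ℝ (Set.Ioc (0 : ℝ) 4) f)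
    (hmono : AntitoneOn f (Set.Ioc (0 : ℝ) 4)) :
    (∀ x : Fin N → EuclideanSpace ℝ (Fin n), (∀ i, ‖x i‖ = 1) →
      Function.Injective x →
      (N : ℝ) * ((N : ℝ) - 1) * f (2 * N / ((N : ℝ) - 1)) ≤
        ∑ p ∈ Finset.univ.offDiag, f (‖x p.1 - x p.2‖ ^ 2)) ∧
    (N ≤ n + 1 →
      ∃ y : Fin N → EuclideanSpace ℝ (Fin n), (∀ i, ‖y i‖ = 1) ∧
        Function.Injective y ∧
        (∀ i j, i ≠ j → ‖y i - y j‖ ^ 2 = 2 * N / ((N : ℝ) - 1)) ∧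
        ∑ p ∈ Finset.univ.offDiag, f (‖y p.1 - y p.2‖ ^ 2) =
          (N : ℝ) * ((N : ℝ) - 1) * f (2 * N / ((N : ℝ) - 1))) := by
  have hN₂ : (2 : ℝ) ≤ N := by exact_mod_cast hN
  have hN₁ : (0 : ℝ) < N - 1 := by linarith
  have hT : 2 * N / ((N : ℝ) - 1) ∈ Set.Ioc (0 : ℝ) 4 :=
    ⟨by positivity, by rw [div_le_iff₀ hN₁]; linarith⟩
  have hcard : ((univ : Finset (Fin N)).offDiag.card : ℝ) = N * (N - 1) := by
    simpa using card_offDiag_univ (ι := Fin N)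
  refine ⟨fun x hx hinj => ?_, fun hn => ?_⟩
  · rw [← hcard]
    refine hconv.card_mul_le_sum_of_antitoneOn hmono (fun p hp => ?_) hT ?_
    · exact norm_sub_sq_mem_Ioc (hx _) (hx _) (hinj.ne (mem_offDiag.1 hp).2.2)
    · calc _ ≤ 2 * (N : ℝ) ^ 2 := by simpa using sum_offDiag_norm_sub_sq_le x hx
        _ = _ := by rw [hcard]; field_simp
  · obtain ⟨y, hy, hinner⟩ := exists_unit_vectors_inner_eq_neg_inv
      (ι := Fin N) (F := EuclideanSpace ℝ (Fin n)) (by simp; omega) (by simpa using hn)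
    have hdist (i j : Fin N) (hij : i ≠ j) : ‖y i - y j‖ ^ 2 = 2 * N / ((N : ℝ) - 1) := by
      rw [norm_sub_sq_real, hy, hy, hinner i j hij, Fintype.card_fin]
      field_simp
      ring
    refine ⟨y, hy, fun i j hyij => ?_, hdist, ?_⟩
    · by_contra hij
      have := hdist i j hij
      rw [hyij, sub_self, norm_zero] at this
      exact hT.1.ne' (by simpa using this.symm)
    · rw [sum_congr rfl fun p hp => by rw [hdist _ _ (mem_offDiag.1 hp).2.2], sum_const,
        nsmul_eq_mul, hcard]
end

section
/- (Linear programming bound for energy, Yudin.) Let n ≥ 2, let f : ℝ → ℝ be a potential function, let h : ℝ → ℝ, and let c ∈ ℝ. Assume: (i) for every M ≥ 1 and every finite sequence y_1, …, y_M of unit vectors in ℝ^n, Σ_{i=1}^M Σ_{j=1}^M h(⟨y_i, y_j⟩) ≥ M² c (i.e., h − c is a function of positive type on the sphere, which holds when h has an expansion in ultraspherical polynomials with nonnegative coefficients and constant term c); and (ii) h(t) ≤ f(2 − 2t) for all t ∈ [−1, 1). Then every configuration of N pairwise distinct unit vectors x_1, …, x_N in ℝ^n satisfies Σ_{i≠j}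 f(‖x_i − x_j‖²) ≥ N² c − N h(1). -/
/-!
Split the double sum `∑ᵢ ∑ⱼ h ⟪xᵢ, xⱼ⟫` into its diagonal, which is `N · h 1` because the
points are unit vectors, and its off-diagonal part. Distinct unit vectors have inner product
in `[-1, 1)` and `‖xᵢ - xⱼ‖² = 2 - 2⟪xᵢ, xⱼ⟫`, so `h ≤ f(2 - 2t)` bounds the off-diagonal part
by the `f`-energy, while positive type bounds the whole double sum below by `N² c`.
-/

open Finset

theorem Finset.sum_sum_eq_sum_add_sum_offDiag {ι M : Type*} [DecidableEq ι] [AddCommMonoid M]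
    (s : Finset ι) (g : ι → ι → M) :
    ∑ i ∈ s, ∑ j ∈ s, g i j = ∑ i ∈ s, g i i + ∑ p ∈ s.offDiag, g p.1 p.2 := by
  rw [← sum_product' s s g, ← diag_union_offDiag, sum_union (disjoint_diag_offDiag s),
    sum_diag]

section UnitVectors

variable {F : Type*} [NormedAddCommGroup F] [InnerProductSpace ℝ F] {x y : F}

theorem real_inner_mem_Ico_of_norm_eq_one_of_ne (hx : ‖x‖ = 1) (hy : ‖y‖ = 1) (hxy : x ≠ y) :
    inner ℝ x y ∈ Set.Ico (-1 : ℝ) 1 :=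
  ⟨neg_one_le_real_inner_of_norm_eq_one hx hy,
    (inner_lt_one_iff_real_of_norm_eq_one hx hy).mpr hxy⟩

theorem norm_sub_sq_eq_two_sub_two_mul_real_inner (hx : ‖x‖ = 1) (hy : ‖y‖ = 1) :
    ‖x - y‖ ^ 2 = 2 - 2 * inner ℝ x y := by
  rw [norm_sub_sq_real, hx, hy]
  ring

theorem sum_sum_real_inner_le_card_mul_add_energy {ι : Type*} [Fintype ι] [DecidableEq ι]
    (f h : ℝ → ℝ) (hle : ∀ t ∈ Set.Ico (-1 : ℝ) 1, h t ≤ f (2 - 2 * t))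
    (x : ι → F) (hx : ∀ i, ‖x i‖ = 1) (hinj : Function.Injective x) :
    ∑ i, ∑ j, h (inner ℝ (x i) (x j)) ≤
      Fintype.card ι * h 1 + ∑ p ∈ univ.offDiag, f (‖x p.1 - x p.2‖ ^ 2) := by
  rw [sum_sum_eq_sum_add_sum_offDiag]
  have hdiag : ∑ i, h (inner ℝ (x i) (x i)) = Fintype.card ι * h 1 := by
    simp [hx]
  have hoff : ∀ p ∈ (univ : Finset ι).offDiag,
      h (inner ℝ (x p.1) (x p.2)) ≤ f (‖x p.1 - x p.2‖ ^ 2) := by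
    rintro ⟨i, j⟩ hij
    rw [norm_sub_sq_eq_two_sub_two_mul_real_inner (hx i) (hx j)]
    exact hle _ <| real_inner_mem_Ico_of_norm_eq_one_of_ne (hx i) (hx j)
      (hinj.ne (mem_offDiag.mp hij).2.2)
  rw [hdiag]
  exact add_le_add_right (sum_le_sum hoff) _

end UnitVectors

theorem yudin_lp_energy_bound_general (n : ℕ) (f h : ℝ → ℝ) (c : ℝ)
    (hpos : ∀ M : ℕ, 1 ≤ M → ∀ y : Fin M → EuclideanSpace ℝ (Fin n),
      (∀ i, ‖y i‖ = 1) →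
      (M : ℝ) ^ 2 * c ≤ ∑ i, ∑ j, h (inner ℝ (y i) (y j) : ℝ))
    (hle : ∀ t ∈ Set.Ico (-1 : ℝ) 1, h t ≤ f (2 - 2 * t))
    (N : ℕ) (x : Fin N → EuclideanSpace ℝ (Fin n))
    (hx : ∀ i, ‖x i‖ = 1) (hinj : Function.Injective x) :
    (N : ℝ) ^ 2 * c - N * h 1 ≤
      ∑ p ∈ Finset.univ.offDiag, f (‖x p.1 - x p.2‖ ^ 2) := by
  rcases Nat.eq_zero_or_pos N with rfl | hN
  · simp
  have hlower := hpos N hN x hx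
  have hupper := sum_sum_real_inner_le_card_mul_add_energy f h hle x hx hinj
  rw [Fintype.card_fin] at hupper
  linarith

/-- Yudin's linear programming bound for energy: if `h - c` is of positive type on the
sphere and `h(t) ≤ f(2-2t)` on `[-1,1)`, then every `N`-point configuration of distinct
unit vectors has `f`-energy at least `N²c - N·h(1)`. -/
theorem yudin_lp_energy_bound (n : ℕ) (hn : 2 ≤ n) (f h : ℝ → ℝ) (c : ℝ)
    (hpos : ∀ M : ℕ, 1 ≤ M → ∀ y : Fin M → EuclideanSpace ℝ (Fin n),
      (∀ i, ‖y i‖ = 1) →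
      (M : ℝ) ^ 2 * c ≤ ∑ i, ∑ j, h (inner ℝ (y i) (y j) : ℝ))
    (hle : ∀ t ∈ Set.Ico (-1 : ℝ) 1, h t ≤ f (2 - 2 * t))
    (N : ℕ) (x : Fin N → EuclideanSpace ℝ (Fin n))
    (hx : ∀ i, ‖x i‖ = 1) (hinj : Function.Injective x) :
    (N : ℝ) ^ 2 * c - N * h 1 ≤
      ∑ p ∈ Finset.univ.offDiag, f (‖x p.1 - x p.2‖ ^ 2) :=
  yudin_lp_energy_bound_general n f h c hpos hle N x hx hinj
end

section
/- (Linear programming bound for spherical codes.) Let n ≥ 2, let 0 < θ ≤ π, let h : ℝ → ℝ and c > 0. Assume: (i) for every M ≥ 1 and every finite sequence y_1, …, y_M of unit vectors in ℝ^n, Σ_{i=1}^M Σ_{j=1}^M h(⟨y_i, y_j⟩) ≥ M² c (i.e., h − c is a function of positive type on the sphere, which holds when h has an expansion in ultraspherical polynomials with nonnegative coefficients and constant term c); and (ii) h(t) ≤ 0 for all t ∈ [−1, cos θ]. Then every spherical code in S^{n−1} with minimal angle at least θ — i.e., every finite set C of unit vectors with ⟨x, y⟩ ≤ cos θ for all distinct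 x, y ∈ C — satisfies |C| ≤ h(1)/c. -/
/-!
Sum `h(⟨x, y⟩)` over all ordered pairs of points of the code. Positive type bounds the double
sum below by `|C|² c`. On the other hand, every off-diagonal inner product lies in
`[-1, cos θ]`, where `h ≤ 0`, so only the `|C|` diagonal terms `h(1)` survive and the double sum
is at most `|C| h(1)`. Comparing the two bounds gives `|C| c ≤ h(1)`.
-/

open Finset RealInnerProductSpace

namespace SphericalCode

variable {E : Type*} [NormedAddCommGroup E] [InnerProductSpace ℝ E]

theorem sum_sum_le_card_mul {h : ℝ → ℝ} {s : ℝ} (hneg : ∀ t ∈ Set.Icc (-1 : ℝ) s, h t ≤ 0)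
    {C : Finset E} (hC : ∀ x ∈ C, ‖x‖ = 1)
    (hcode : ∀ x ∈ C, ∀ y ∈ C, x ≠ y → ⟪x, y⟫ ≤ s) :
    ∑ x ∈ C, ∑ y ∈ C, h ⟪x, y⟫ ≤ #C * h 1 := by
  classical
  have hrow : ∀ x ∈ C, ∑ y ∈ C, h ⟪x, y⟫ ≤ h 1 := by
    intro x hx
    have hoff : ∑ y ∈ C.erase x, h ⟪x, y⟫ ≤ 0 := by
      refine sum_nonpos fun y hy => hneg _ ⟨?_, ?_⟩
      · exact neg_one_le_real_inner_of_norm_eq_one (hC x hx) (hC y (mem_of_mem_erase hy))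
      · exact hcode x hx y (mem_of_mem_erase hy) (ne_of_mem_erase hy).symm
    rw [← add_sum_erase C _ hx, real_inner_self_eq_norm_sq, hC x hx, one_pow]
    linarith
  calc ∑ x ∈ C, ∑ y ∈ C, h ⟪x, y⟫ ≤ ∑ _x ∈ C, h 1 := sum_le_sum hrow
    _ = #C * h 1 := by rw [sum_const, nsmul_eq_mul]

theorem card_sq_mul_le_sum_sum {h : ℝ → ℝ} {c : ℝ}
    (hpos : ∀ M : ℕ, 1 ≤ M → ∀ y : Fin M → E, (∀ i, ‖y i‖ = 1) →
      (M : ℝ) ^ 2 * c ≤ ∑ i, ∑ j, h ⟪y i, y j⟫)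
    {C : Finset E} (hC : ∀ x ∈ C, ‖x‖ = 1) (hne : C.Nonempty) :
    (#C : ℝ) ^ 2 * c ≤ ∑ x ∈ C, ∑ y ∈ C, h ⟪x, y⟫ := by
  have hreindex (f : E → ℝ) : ∑ i, f (C.equivFin.symm i) = ∑ x ∈ C, f x :=
    (Equiv.sum_comp C.equivFin.symm (fun x => f x)).trans (sum_coe_sort C f)
  calc (#C : ℝ) ^ 2 * c
      ≤ ∑ i, ∑ j, h ⟪(C.equivFin.symm i : E), C.equivFin.symm j⟫ :=
        hpos #C hne.card_pos _ fun i => hC _ (C.equivFin.symm i).2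
    _ = ∑ x ∈ C, ∑ y ∈ C, h ⟪x, y⟫ := by
        rw [← hreindex]
        exact sum_congr rfl fun i _ => hreindex (fun y => h ⟪(C.equivFin.symm i : E), y⟫)

theorem card_mul_le {h : ℝ → ℝ} {c s : ℝ}
    (hpos : ∀ M : ℕ, 1 ≤ M → ∀ y : Fin M → E, (∀ i, ‖y i‖ = 1) →
      (M : ℝ) ^ 2 * c ≤ ∑ i, ∑ j, h ⟪y i, y j⟫)
    (hneg : ∀ t ∈ Set.Icc (-1 : ℝ) s, h t ≤ 0)
    {C : Finset E} (hC : ∀ x ∈ C, ‖x‖ = 1)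
    (hcode : ∀ x ∈ C, ∀ y ∈ C, x ≠ y → ⟪x, y⟫ ≤ s) (hne : C.Nonempty) :
    #C * c ≤ h 1 := by
  have hcard : (0 : ℝ) < #C := by exact_mod_cast hne.card_pos
  have := (card_sq_mul_le_sum_sum hpos hC hne).trans (sum_sum_le_card_mul hneg hC hcode)
  nlinarith

end SphericalCode

theorem lp_bound_spherical_codes_general (n : ℕ) (hn : 2 ≤ n) (θ : ℝ)
    (h : ℝ → ℝ) (c : ℝ) (hc : 0 < c)
    (hpos : ∀ M : ℕ, 1 ≤ M → ∀ y : Fin M → EuclideanSpace ℝ (Fin n),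
      (∀ i, ‖y i‖ = 1) →
      (M : ℝ) ^ 2 * c ≤ ∑ i, ∑ j, h (inner ℝ (y i) (y j) : ℝ))
    (hneg : ∀ t ∈ Set.Icc (-1 : ℝ) (Real.cos θ), h t ≤ 0)
    (C : Finset (EuclideanSpace ℝ (Fin n)))
    (hC : ∀ x ∈ C, ‖x‖ = 1)
    (hcode : ∀ x ∈ C, ∀ y ∈ C, x ≠ y → (inner ℝ x y : ℝ) ≤ Real.cos θ) :
    (C.card : ℝ) ≤ h 1 / c := by
  rw [le_div_iff₀ hc]
  rcases C.eq_empty_or_nonempty with rfl | hne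
  · -- an empty code needs `h 1 ≥ 0`, read off the one-point code `{e₀}`
    let e : EuclideanSpace ℝ (Fin n) := EuclideanSpace.single ⟨0, by omega⟩ 1
    have he : ‖e‖ = 1 := by simp [e]
    have hce : c ≤ h 1 := by
      simpa using SphericalCode.card_mul_le hpos hneg (C := {e}) (by simpa using he) (by simp)
        (singleton_nonempty e)
    simpa using hc.le.trans hce
  · exact SphericalCode.card_mul_le hpos hneg hC hcode hne

/-- The linear programming bound for spherical codes: if `h - c` is of positive type on
the sphere, `c > 0`, and `h(t) ≤ 0` on `[-1, cos θ]`, then every spherical code with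
minimal angle at least `θ` has at most `h(1)/c` points. -/
theorem lp_bound_spherical_codes (n : ℕ) (hn : 2 ≤ n) (θ : ℝ)
    (hθ : 0 < θ) (hθπ : θ ≤ Real.pi) (h : ℝ → ℝ) (c : ℝ) (hc : 0 < c)
    (hpos : ∀ M : ℕ, 1 ≤ M → ∀ y : Fin M → EuclideanSpace ℝ (Fin n),
      (∀ i, ‖y i‖ = 1) →
      (M : ℝ) ^ 2 * c ≤ ∑ i, ∑ j, h (inner ℝ (y i) (y j) : ℝ))
    (hneg : ∀ t ∈ Set.Icc (-1 : ℝ) (Real.cos θ), h t ≤ 0)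
    (C : Finset (EuclideanSpace ℝ (Fin n)))
    (hC : ∀ x ∈ C, ‖x‖ = 1)
    (hcode : ∀ x ∈ C, ∀ y ∈ C, x ≠ y → (inner ℝ x y : ℝ) ≤ Real.cos θ) :
    (C.card : ℝ) ≤ h 1 / c :=
  lp_bound_spherical_codes_general n hn θ h c hc hpos hneg C hC hcode
end

section
/- Let n ≥ 1. For every polynomial p in n real variables there exists a unique harmonic polynomial q in n variables (i.e., Δq = Σ_{i=1}^n ∂²q/∂x_i² = 0) such that p(x) = q(x) for all x on the unit sphere S^{n−1} = {x ∈ ℝ^n : x_1² + ⋯ + x_n² = 1}. Moreover, if deg p ≤ k then the harmonic representative q satisfies deg q ≤ k. -/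
/-!
Write `Δ` for the Laplacian and `r² = ∑ Xᵢ²`. For `f` homogeneous of degree `d` in `n`
variables, `Δ (r² f) = r² Δf + (2n + 4d) f`; applying `Δ` repeatedly to `r² Δf + c f = 0`
(`c > 0`) lowers the degree while keeping the constant positive, so `Δ (r² ·)` is injective on
homogeneous polynomials. Comparing top homogeneous components, `g ↦ Δ ((r² - 1) g)` is then
injective, hence bijective on the finite-dimensional space of polynomials of degree `≤ m`.
Taking `g` with `Δ ((r² - 1) g) = Δ p`, the polynomial `q = p - (r² - 1) g` is harmonic and
equals `p` on the sphere.

For uniqueness, a polynomial vanishing on the sphere is divisible by `r² - 1`: divide by this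
monic quadratic in `x₀`; the remainder is affine in `x₀` and vanishes at `x₀ = ±√(1 - |x'|²)`,
so its coefficients vanish on the open unit ball of the remaining variables, hence identically.
A harmonic multiple of `r² - 1` is zero by the injectivity above.
-/

open Finset

namespace MvPolynomial

variable {σ R : Type*} [CommSemiring R] {f : MvPolynomial σ R} {d : ℕ}

theorem homogeneousComponent_map_eq (T : MvPolynomial σ R →ₗ[R] MvPolynomial σ R)
    (f : MvPolynomial σ R) {j k : ℕ} (hj : (T (homogeneousComponent j f)).IsHomogeneous k)
    (hi : ∀ i ≠ j, ∃ e ≠ k, (T (homogeneousComponent i f)).IsHomogeneous e) :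
    homogeneousComponent k (T f) = T (homogeneousComponent j f) := by
  conv_lhs => rw [← sum_homogeneousComponent f, map_sum, map_sum]
  rw [sum_eq_single j]
  · exact homogeneousComponent_eq_self hj
  · intro i _ hij
    obtain ⟨e, he, hTi⟩ := hi i hij
    rw [homogeneousComponent_of_mem hTi, if_neg he.symm]
  · intro hj
    rw [homogeneousComponent_eq_zero j f (by simpa using hj), map_zero, map_zero]

theorem homogeneousComponent_totalDegree_ne_zero (hf : f ≠ 0) :
    homogeneousComponent f.totalDegree f ≠ 0 := by
  obtain ⟨s, hs, hdeg⟩ :=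
    exists_mem_eq_sup _ (support_nonempty.mpr hf) fun s => s.sum fun _ e => e
  intro h
  have := coeff_homogeneousComponent f.totalDegree f s
  rw [h, coeff_zero, if_pos (by rw [totalDegree, hdeg]; simp [Finsupp.degree_apply, Finsupp.sum])]
    at this
  exact mem_support_iff.mp hs this.symm

variable [Fintype σ]

noncomputable def laplacian : MvPolynomial σ R →ₗ[R] MvPolynomial σ R :=
  ∑ i, (pderiv i).toLinearMap ∘ₗ (pderiv i).toLinearMap

local notation "Δ" => MvPolynomial.laplacian

noncomputable def radiusSq : MvPolynomial σ R := ∑ i, X i ^ 2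

theorem laplacian_apply (f : MvPolynomial σ R) : Δ f = ∑ i, pderiv i (pderiv i f) := by
  simp [laplacian]

theorem IsHomogeneous.laplacian (hf : f.IsHomogeneous d) : (Δ f).IsHomogeneous (d - 2) := by
  rw [laplacian_apply, show d - 2 = d - 1 - 1 by omega]
  exact .sum _ _ _ fun i _ => hf.pderiv.pderiv

theorem IsHomogeneous.laplacian_eq_zero_of_lt_two (hf : f.IsHomogeneous d) (hd : d < 2) :
    Δ f = 0 := by
  rw [laplacian_apply]
  refine sum_eq_zero fun i _ => ?_
  have h0 : (pderiv i f).totalDegree = 0 := by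
    have := (hf.pderiv (i := i)).totalDegree_le
    omega
  rw [totalDegree_eq_zero_iff_eq_C.mp h0, pderiv_C]

theorem laplacian_eq_zero_of_totalDegree_lt_two (hf : f.totalDegree < 2) : Δ f = 0 := by
  conv_lhs => rw [← sum_homogeneousComponent f, map_sum]
  exact sum_eq_zero fun i hi =>
    (homogeneousComponent_isHomogeneous i f).laplacian_eq_zero_of_lt_two (by grind)

theorem totalDegree_laplacian_le (f : MvPolynomial σ R) :
    (Δ f).totalDegree ≤ f.totalDegree - 2 := by
  conv_lhs => rw [← sum_homogeneousComponent f, map_sum]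
  refine totalDegree_finsetSum_le fun i hi => ?_
  have := (homogeneousComponent_isHomogeneous i f).laplacian.totalDegree_le
  grind

theorem homogeneousComponent_laplacian (k : ℕ) (f : MvPolynomial σ R) :
    homogeneousComponent k (Δ f) = Δ (homogeneousComponent (k + 2) f) := by
  refine homogeneousComponent_map_eq _ _
    (by simpa using (homogeneousComponent_isHomogeneous (k + 2) f).laplacian) fun i hi => ?_
  rcases lt_or_ge i 2 with hi2 | hi2
  · refine ⟨k + 1, by omega, ?_⟩
    rw [(homogeneousComponent_isHomogeneous i f).laplacian_eq_zero_of_lt_two hi2]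
    exact isHomogeneous_zero _ _ _
  · exact ⟨i - 2, by omega, (homogeneousComponent_isHomogeneous i f).laplacian⟩

theorem isHomogeneous_radiusSq : (radiusSq : MvPolynomial σ R).IsHomogeneous 2 :=
  .sum _ _ _ fun i _ => isHomogeneous_X_pow i 2

theorem eval_radiusSq (x : σ → R) : eval x radiusSq = ∑ i, x i ^ 2 := by
  simp [radiusSq]

theorem pderiv_radiusSq [DecidableEq σ] (i : σ) :
    pderiv i (radiusSq : MvPolynomial σ R) = 2 * X i := by
  simp [radiusSq, pderiv_X, Pi.single_apply]

theorem IsHomogeneous.laplacian_radiusSq_mul (hf : f.IsHomogeneous d) :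
    Δ (radiusSq * f) = radiusSq * Δ f + (2 * Fintype.card σ + 4 * d) • f := by
  classical
  have h2 (i : σ) : pderiv i (2 : MvPolynomial σ R) = 0 := mod_cast (pderiv i).map_natCast 2
  simp only [laplacian_apply, Derivation.leibniz, pderiv_radiusSq, map_add, smul_eq_mul, h2,
    pderiv_X_self]
  rw [sum_congr rfl fun i _ => show _ = radiusSq * pderiv i (pderiv i f) +
    (2 * f + 4 * (X i * pderiv i f)) by ring]
  simp only [sum_add_distrib, ← mul_sum, hf.sum_X_mul_pderiv, sum_const, card_univ, nsmul_eq_mul]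
  push_cast
  ring

theorem homogeneousComponent_laplacian_radiusSq_mul (k : ℕ) (f : MvPolynomial σ R) :
    homogeneousComponent k (Δ (radiusSq * f)) = Δ (radiusSq * homogeneousComponent k f) := by
  have hT (i : ℕ) : (Δ (radiusSq * homogeneousComponent i f)).IsHomogeneous i := by
    simpa using (isHomogeneous_radiusSq.mul (homogeneousComponent_isHomogeneous i f)).laplacian
  exact homogeneousComponent_map_eq (Δ ∘ₗ LinearMap.mulLeft R radiusSq) f (hT k)
    fun i hi => ⟨i, hi, hT i⟩

theorem totalDegree_radiusSq_sub_one_mul_le {S : Type*} [CommRing S] (g : MvPolynomial σ S) :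
    ((radiusSq - 1) * g).totalDegree ≤ g.totalDegree + 2 := by
  have : (radiusSq - 1 : MvPolynomial σ S).totalDegree ≤ 2 :=
    (totalDegree_sub _ _).trans (max_le isHomogeneous_radiusSq.totalDegree_le (by simp))
  have := totalDegree_mul (radiusSq - 1) g
  omega

theorem finSuccEquiv_radiusSq (m : ℕ) :
    finSuccEquiv R m radiusSq = Polynomial.X ^ 2 + Polynomial.C radiusSq := by
  simp [radiusSq, Fin.sum_univ_succ, finSuccEquiv_X_zero, finSuccEquiv_X_succ]

variable {K : Type*} [Field K] [CharZero K]

theorem IsHomogeneous.eq_zero_of_radiusSq_mul_laplacian_add_nsmul_eq_zero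
    {f : MvPolynomial σ K} (hf : f.IsHomogeneous d) {c : ℕ} (hc : 0 < c)
    (h : radiusSq * Δ f + c • f = 0) : f = 0 := by
  induction d using Nat.strong_induction_on generalizing f c with
  | _ d ih =>
  have hΔ : Δ f = 0 := by
    rcases lt_or_ge d 2 with hd | hd
    · exact hf.laplacian_eq_zero_of_lt_two hd
    · refine ih (d - 2) (by omega) hf.laplacian
        (c := 2 * Fintype.card σ + 4 * (d - 2) + c) (by omega) ?_
      have := congrArg Δ h
      rw [map_add, map_nsmul, hf.laplacian.laplacian_radiusSq_mul, map_zero] at this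
      rw [add_nsmul, ← add_assoc, this]
  rw [hΔ, mul_zero, zero_add] at h
  exact (nsmul_eq_zero_iff.mp h).resolve_right hc.ne'

theorem IsHomogeneous.eq_zero_of_laplacian_radiusSq_mul_eq_zero [Nonempty σ]
    {f : MvPolynomial σ K} (hf : f.IsHomogeneous d) (h : Δ (radiusSq * f) = 0) : f = 0 :=
  hf.eq_zero_of_radiusSq_mul_laplacian_add_nsmul_eq_zero
    (by have := Fintype.card_pos (α := σ); omega) (hf.laplacian_radiusSq_mul ▸ h)

theorem eq_zero_of_laplacian_radiusSq_sub_one_mul_eq_zero [Nonempty σ] {g : MvPolynomial σ K}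
    (h : Δ ((radiusSq - 1) * g) = 0) : g = 0 := by
  by_contra hg
  have hD : Δ (radiusSq * g) = Δ g := by
    rwa [sub_one_mul, map_sub, sub_eq_zero] at h
  have htop := congrArg (homogeneousComponent g.totalDegree) hD
  rw [homogeneousComponent_laplacian_radiusSq_mul, homogeneousComponent_laplacian,
    homogeneousComponent_eq_zero (g.totalDegree + 2) g (by omega), map_zero] at htop
  exact homogeneousComponent_totalDegree_ne_zero hg
    ((homogeneousComponent_isHomogeneous _ g).eq_zero_of_laplacian_radiusSq_mul_eq_zero htop)

theorem exists_laplacian_radiusSq_sub_one_mul_eq [Nonempty σ] {f : MvPolynomial σ K} {m : ℕ}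
    (hf : f.totalDegree ≤ m) :
    ∃ g : MvPolynomial σ K, g.totalDegree ≤ m ∧ Δ ((radiusSq - 1) * g) = f := by
  let T : restrictTotalDegree σ K m →ₗ[K] restrictTotalDegree σ K m :=
    (Δ ∘ₗ LinearMap.mulLeft K (radiusSq - 1)).restrict fun g hg => by
      rw [mem_restrictTotalDegree] at hg ⊢
      have := totalDegree_laplacian_le ((radiusSq - 1) * g)
      have := totalDegree_radiusSq_sub_one_mul_le g
      simp only [LinearMap.comp_apply, LinearMap.mulLeft_apply]
      omega
  have hT : Function.Injective T := (injective_iff_map_eq_zero T).mpr fun g hg =>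
    Subtype.ext (eq_zero_of_laplacian_radiusSq_sub_one_mul_eq_zero (congrArg Subtype.val hg))
  obtain ⟨g, hg⟩ :=
    LinearMap.injective_iff_surjective.mp hT ⟨f, (mem_restrictTotalDegree ..).mpr hf⟩
  exact ⟨g, (mem_restrictTotalDegree ..).mp g.2, congrArg Subtype.val hg⟩

theorem exists_harmonic_eq_add_radiusSq_sub_one_mul [Nonempty σ] (p : MvPolynomial σ K) :
    ∃ q g : MvPolynomial σ K,
      Δ q = 0 ∧ q.totalDegree ≤ p.totalDegree ∧ p = q + (radiusSq - 1) * g := by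
  rcases lt_or_ge p.totalDegree 2 with hp | hp
  · exact ⟨p, 0, laplacian_eq_zero_of_totalDegree_lt_two hp, le_rfl, by simp⟩
  obtain ⟨g, hg, hΔ⟩ := exists_laplacian_radiusSq_sub_one_mul_eq (totalDegree_laplacian_le p)
  refine ⟨p - (radiusSq - 1) * g, g, by rw [map_sub, hΔ, sub_self], ?_, by ring⟩
  have := totalDegree_radiusSq_sub_one_mul_le g
  exact (totalDegree_sub _ _).trans (max_le le_rfl (by omega))

theorem eq_zero_of_eventually_eval_eq_zero {𝕜 : Type*} [RCLike 𝕜] {f : MvPolynomial σ 𝕜}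
    {z : σ → 𝕜} (h : ∀ᶠ x in nhds z, eval x f = 0) : f = 0 :=
  funext fun x => by
    simpa using congrFun ((AnalyticOnNhd.eval_mvPolynomial f).eq_of_eventuallyEq
      analyticOnNhd_const h) x

theorem radiusSq_sub_one_dvd_of_eval_eq_zero {m : ℕ} {f : MvPolynomial (Fin (m + 1)) ℝ}
    (hf : ∀ x : Fin (m + 1) → ℝ, ∑ i, x i ^ 2 = 1 → eval x f = 0) : radiusSq - 1 ∣ f := by
  set φ := finSuccEquiv ℝ m
  have hS : φ (radiusSq - 1) = Polynomial.X ^ 2 + Polynomial.C (radiusSq - 1) := by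
    rw [map_sub, map_one, finSuccEquiv_radiusSq, Polynomial.C_sub, Polynomial.C_1]; ring
  have hmonic : (φ (radiusSq - 1)).Monic := hS ▸ Polynomial.monic_X_pow_add_C _ two_ne_zero
  rw [← map_dvd_iff φ, ← Polynomial.modByMonic_eq_zero_iff_dvd hmonic]
  set B := φ f %ₘ φ (radiusSq - 1)
  have hSdeg : (φ (radiusSq - 1)).natDegree = 2 := by rw [hS, Polynomial.natDegree_X_pow_add_C]
  have hdeg : B.natDegree < 2 :=
    hSdeg ▸ Polynomial.natDegree_modByMonic_lt (φ f) hmonic fun h => by simp [h] at hSdeg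
  have hroot (x : Fin m → ℝ) (y : ℝ) (hxy : y ^ 2 + ∑ i, x i ^ 2 = 1) :
      (B.map (eval x)).eval y = 0 := by
    have := hf (Fin.cons y x) (by simpa [Fin.sum_univ_succ] using hxy)
    have hSxy : ((φ (radiusSq - 1)).map (eval x)).eval y = 0 := by
      rw [hS, Polynomial.map_add, Polynomial.map_pow, Polynomial.map_X, Polynomial.map_C,
        Polynomial.eval_add, Polynomial.eval_pow, Polynomial.eval_X, Polynomial.eval_C, map_sub,
        map_one, eval_radiusSq]
      linarith
    rwa [eval_eq_eval_mv_eval', ← Polynomial.modByMonic_add_div (φ f) (φ (radiusSq - 1)),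
      Polynomial.map_add, Polynomial.map_mul, Polynomial.eval_add, Polynomial.eval_mul, hSxy,
      zero_mul, add_zero] at this
  have hball (x : Fin m → ℝ) (hx : ∑ i, x i ^ 2 < 1) : B.map (eval x) = 0 := by
    set y := √(1 - ∑ i, x i ^ 2)
    have hy : y ^ 2 + ∑ i, x i ^ 2 = 1 := by rw [Real.sq_sqrt (by linarith)]; ring
    have hy0 : 0 < y := Real.sqrt_pos.mpr (by linarith)
    refine Polynomial.eq_zero_of_natDegree_lt_card_of_eval_eq_zero _ (f := ![y, -y])
      ?_ ?_ (Polynomial.natDegree_map_le.trans_lt (by simpa using hdeg))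
    · intro i j hij
      fin_cases i <;> fin_cases j <;> simp at hij ⊢ <;> linarith
    · intro i
      fin_cases i
      · exact hroot x y hy
      · exact hroot x (-y) (by simpa using hy)
  have hnhds : ∀ᶠ x in nhds (0 : Fin m → ℝ), ∑ i, x i ^ 2 < 1 :=
    (isOpen_lt (by fun_prop) continuous_const).mem_nhds (by simp)
  ext k : 1
  exact eq_zero_of_eventually_eval_eq_zero (hnhds.mono fun x hx => by
    simpa using congrArg (Polynomial.coeff · k) (hball x hx))

theorem eq_of_laplacian_eq_zero_of_eval_eq_on_sphere {m : ℕ}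
    {q q' : MvPolynomial (Fin (m + 1)) ℝ} (hq : Δ q = 0) (hq' : Δ q' = 0)
    (h : ∀ x : Fin (m + 1) → ℝ, ∑ i, x i ^ 2 = 1 → eval x q = eval x q') : q = q' := by
  obtain ⟨g, hg⟩ := radiusSq_sub_one_dvd_of_eval_eq_zero (f := q - q') fun x hx => by
    rw [map_sub, h x hx, sub_self]
  have hΔ : Δ ((radiusSq - 1) * g) = 0 := by rw [← hg, map_sub, hq, hq', sub_self]
  rw [← sub_eq_zero, hg, eq_zero_of_laplacian_radiusSq_sub_one_mul_eq_zero hΔ, mul_zero]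

end MvPolynomial

/-- Every polynomial on ℝⁿ agrees on the unit sphere with a unique harmonic polynomial,
and the harmonic representative has total degree at most that of the original
polynomial. -/
theorem exists_unique_harmonic_representative (n : ℕ) (hn : 1 ≤ n)
    (p : MvPolynomial (Fin n) ℝ) :
    ∃ q : MvPolynomial (Fin n) ℝ,
      (∑ i, MvPolynomial.pderiv i (MvPolynomial.pderiv i q) = 0) ∧
      (∀ x : Fin n → ℝ, ∑ i, x i ^ 2 = 1 →
        MvPolynomial.eval x p = MvPolynomial.eval x q) ∧
      q.totalDegree ≤ p.totalDegree ∧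
      ∀ q' : MvPolynomial (Fin n) ℝ,
        (∑ i, MvPolynomial.pderiv i (MvPolynomial.pderiv i q') = 0) →
        (∀ x : Fin n → ℝ, ∑ i, x i ^ 2 = 1 →
          MvPolynomial.eval x p = MvPolynomial.eval x q') →
        q' = q := by
  obtain ⟨m, rfl⟩ : ∃ m, n = m + 1 := ⟨n - 1, by omega⟩
  obtain ⟨q, g, hq, hdeg, rfl⟩ := MvPolynomial.exists_harmonic_eq_add_radiusSq_sub_one_mul p
  have hsphere (x : Fin (m + 1) → ℝ) (hx : ∑ i, x i ^ 2 = 1) :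
      MvPolynomial.eval x (q + (MvPolynomial.radiusSq - 1) * g) = MvPolynomial.eval x q := by
    simp [MvPolynomial.eval_radiusSq, hx]
  refine ⟨q, (MvPolynomial.laplacian_apply q).symm.trans hq, hsphere, hdeg,
    fun q' hq' hpq' => ?_⟩
  exact MvPolynomial.eq_of_laplacian_eq_zero_of_eval_eq_on_sphere
    ((MvPolynomial.laplacian_apply q').trans hq') hq
    fun x hx => by rw [← hpq' x hx, hsphere x hx]
end
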